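/- arXiv:1904.07139 — 3 statements merged into one kernel-verified Lean document; each statement's English description precedes it below -/
import Mathlib

section
/- For d ≥ 2 and N ≥ 1, the function f_{d,N}(x,y) = ⌊y/2⌋·2^{(2d-3)N+2} + 2σ_{d-1,N}(x) + (y mod 2), defined for x ∈ Z^{d-1} and y ∈ Z, is injective on (-2^N, 2^N)^d ∩ Z^d. -/
/-!
Write `f(x, y) = ⌊y/2⌋ · 2^K + (2σ(x) + (y mod 2))` with `K = (2d-3)N + 2`. On the box
`|σ(x)| < 2^{(2d-3)N} = 2^K / 4`, so two values of the bracket differ by less than `2^K`;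
hence `f` determines `⌊y/2⌋` and the bracket, parity then gives `y mod 2` and `σ(x)`. Finally
`σ(x)` is an expansion in base `4^N` whose digit differences stay below `4^N` in absolute value,
so it determines `x`.
-/

/-- `f_{d,N}`, with `d = m + 1`, viewed as a map on pairs `(x, y) ∈ ℤ^{d-1} × ℤ`:
`f(x,y) = ⌊y/2⌋·2^{(2d-3)N+2} + 2σ_{d-1,N}(x) + (y mod 2)`.
(Note: `ℤ` division/mod in Lean is Euclidean, which agrees with floor for divisor `2`.) -/
def fdN (m N : ℕ) (p : (Fin m → ℤ) × ℤ) : ℤ :=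
  (p.2 / 2) * 2 ^ ((2 * m - 1) * N + 2) +
    2 * (∑ j : Fin m, p.1 j * 4 ^ ((j : ℕ) * N)) + p.2 % 2

theorem Int.eq_and_eq_of_mul_add_eq_mul_add {a a' M s s' : ℤ} (h : a * M + s = a' * M + s')
    (hs : |s - s'| < M) : a = a' ∧ s = s' := by
  have hss' : s - s' = 0 := Int.eq_zero_of_abs_lt_dvd ⟨a' - a, by linarith⟩ hs
  have hM : M ≠ 0 := (lt_of_le_of_lt (abs_nonneg _) hs).ne'
  refine ⟨?_, by linarith⟩
  have : (a - a') * M = 0 := by linarith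
  simpa [sub_eq_zero, hM] using this

theorem Int.abs_sub_lt_sq_of_abs_lt {x x' b : ℤ} (hx : |x| < b) (hx' : |x'| < b) :
    |x - x'| < b ^ 2 := by
  rw [abs_lt] at hx hx' ⊢
  constructor <;> nlinarith

theorem Int.eq_zero_of_sum_mul_pow_eq_zero {m : ℕ} {c : ℤ} {d : Fin m → ℤ}
    (hd : ∀ j, |d j| < c) (h : ∑ j, d j * c ^ (j : ℕ) = 0) : d = 0 := by
  induction m with
  | zero => exact Subsingleton.elim _ _
  | succ n ih =>
    set rest := ∑ j : Fin n, d j.succ * c ^ (j : ℕ)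
    have hsplit : d 0 + c * rest = 0 := by
      rw [Fin.sum_univ_succ] at h
      simpa [rest, Finset.mul_sum, pow_succ, mul_comm, mul_left_comm] using h
    have hd0 : d 0 = 0 := Int.eq_zero_of_abs_lt_dvd ⟨-rest, by linarith⟩ (hd 0)
    have hc : c ≠ 0 := (lt_of_le_of_lt (abs_nonneg _) (hd 0)).ne'
    have htail : (fun j : Fin n => d j.succ) = 0 :=
      ih (d := fun j => d j.succ) (fun j => hd j.succ) (by simpa [hd0, hc] using hsplit)
    funext j
    exact Fin.cases hd0 (fun j => congrFun htail j) j

theorem Int.eq_of_sum_mul_pow_eq {m : ℕ} {c : ℤ} {x x' : Fin m → ℤ}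
    (hc : ∀ j, |x j - x' j| < c) (h : ∑ j, x j * c ^ (j : ℕ) = ∑ j, x' j * c ^ (j : ℕ)) :
    x = x' := by
  refine sub_eq_zero.mp (Int.eq_zero_of_sum_mul_pow_eq_zero hc ?_)
  simp [sub_mul, Finset.sum_sub_distrib, h]

/-- `(b - 1)(b + 1)(1 + b² + ⋯ + b^{2(m-1)}) = b^{2m} - 1` -/
theorem Int.abs_sum_mul_sq_pow_mul_le {m : ℕ} {b : ℤ} {x : Fin m → ℤ}
    (hx : ∀ j, |x j| < b) :
    |∑ j, x j * (b ^ 2) ^ (j : ℕ)| * (b + 1) ≤ b ^ (2 * m) - 1 := by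
  induction m with
  | zero => simp
  | succ n ih =>
    have hb : 0 < b := lt_of_le_of_lt (abs_nonneg _) (hx 0)
    have hx0 : |x 0| ≤ b - 1 := by have := hx 0; omega
    have htail := ih (fun j => hx j.succ)
    have hsplit : ∑ j, x j * (b ^ 2) ^ (j : ℕ)
        = x 0 + b ^ 2 * ∑ j : Fin n, x j.succ * (b ^ 2) ^ (j : ℕ) := by
      rw [Fin.sum_univ_succ, Finset.mul_sum]
      simp [pow_succ, mul_comm, mul_left_comm]
    have htri := abs_add_le (x 0) (b ^ 2 * ∑ j : Fin n, x j.succ * (b ^ 2) ^ (j : ℕ))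
    rw [abs_mul, abs_of_nonneg (sq_nonneg b)] at htri
    rw [hsplit, show 2 * (n + 1) = 2 * n + 2 by ring, pow_add]
    nlinarith

theorem Int.abs_sum_mul_sq_pow_lt {m : ℕ} {b : ℤ} (hb : 0 < b) {x : Fin m → ℤ}
    (hx : ∀ j, |x j| < b) : |∑ j, x j * (b ^ 2) ^ (j : ℕ)| < b ^ (2 * m - 1) := by
  have hpow : b ^ (2 * m) ≤ b ^ (2 * m - 1) * b := by
    rw [← pow_succ]; exact pow_le_pow_right₀ hb (by omega)
  have := Int.abs_sum_mul_sq_pow_mul_le hx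
  nlinarith [abs_nonneg (∑ j, x j * (b ^ 2) ^ (j : ℕ))]

theorem fdN_mk (m N : ℕ) (x : Fin m → ℤ) (y : ℤ) :
    fdN m N (x, y) = y / 2 * (4 * (2 ^ N) ^ (2 * m - 1))
      + (2 * ∑ j, x j * ((2 ^ N) ^ 2) ^ (j : ℕ) + y % 2) := by
  have h4 : ∀ j : Fin m, (4 : ℤ) ^ ((j : ℕ) * N) = ((2 ^ N) ^ 2) ^ (j : ℕ) := fun j => by
    rw [show (4 : ℤ) = 2 ^ 2 by norm_num, ← pow_mul, ← pow_mul, ← pow_mul]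
    ring_nf
  simp only [fdN, h4, pow_add]
  ring

theorem fdN_injOn_box_general (m N : ℕ) :
    Set.InjOn (fdN m N)
      {p : (Fin m → ℤ) × ℤ | (∀ j : Fin m, |p.1 j| < 2 ^ N) ∧ |p.2| < 2 ^ N} := by
  rintro ⟨x, y⟩ ⟨hx, -⟩ ⟨x', y'⟩ ⟨hx', -⟩ h
  dsimp only at hx hx'
  have hb : (0 : ℤ) < 2 ^ N := by positivity
  set σ := ∑ j, x j * ((2 ^ N) ^ 2) ^ (j : ℕ)
  set σ' := ∑ j, x' j * ((2 ^ N) ^ 2) ^ (j : ℕ)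
  have hσ := abs_lt.mp (Int.abs_sum_mul_sq_pow_lt hb hx)
  have hσ' := abs_lt.mp (Int.abs_sum_mul_sq_pow_lt hb hx')
  have hr := Int.emod_two_eq y
  have hr' := Int.emod_two_eq y'
  rw [fdN_mk, fdN_mk] at h
  obtain ⟨hdiv, hlow⟩ :=
    Int.eq_and_eq_of_mul_add_eq_mul_add h (abs_lt.mpr (by constructor <;> omega))
  have hmod : y % 2 = y' % 2 := by omega
  have hσσ' : σ = σ' := by omega
  have hy : y = y' := by
    rw [← Int.ediv_mul_add_emod y 2, ← Int.ediv_mul_add_emod y' 2, hdiv, hmod]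
  have hxx' : x = x' :=
    Int.eq_of_sum_mul_pow_eq (fun j => Int.abs_sub_lt_sq_of_abs_lt (hx j) (hx' j)) hσσ'
  rw [hxx', hy]

/-- For `d = m + 1 ≥ 2` and `N ≥ 1`, `f_{d,N}` is injective on the box
`(-2^N, 2^N)^d ∩ ℤ^d`. -/
theorem fdN_injOn_box (m N : ℕ) (hm : 1 ≤ m) (hN : 1 ≤ N) :
    Set.InjOn (fdN m N)
      {p : (Fin m → ℤ) × ℤ | (∀ j : Fin m, |p.1 j| < 2 ^ N) ∧ |p.2| < 2 ^ N} :=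
  fdN_injOn_box_general m N
end

section
/- For n ∈ Λ_{d,N} = ([0,2^N) ∩ Z)^d and k ∈ Λ_{d,N}^E (vectors k = (x, 2j) in (-2^N,2^N)^d ∩ Z^d with σ_{d,N}(k) ≥ 0 and even last coordinate), the additivity relation f_{d,N}(n + k) = f_{d,N}(n) + f_{d,N}(k) holds. -/
/-- `σ_{d,N}` on pairs `(x, y) ∈ ℤ^{d-1} × ℤ`, i.e. `σ_{d-1,N}(x) + y · 4^{(d-1)N}`. -/
def sigmaFull (m N : ℕ) (p : (Fin m → ℤ) × ℤ) : ℤ :=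
  (∑ j : Fin m, p.1 j * 4 ^ ((j : ℕ) * N)) + p.2 * 4 ^ (m * N)

/-! `f_{d,N}` is the sum of the linear map `2σ_{d-1,N}` and a function of the last coordinate
alone, `y ↦ ⌊y/2⌋·c + (y mod 2)`; the latter is additive as soon as one of the two summands is
even, because then `⌊·/2⌋` and `· mod 2` are. -/

theorem fdN_additive_general (m N : ℕ)
    (n k : (Fin m → ℤ) × ℤ)
    (hkeven : Even k.2) :
    fdN m N (n + k) = fdN m N n + fdN m N k := by
  have hdiv : (n.2 + k.2) / 2 = n.2 / 2 + k.2 / 2 := Int.add_ediv_of_dvd_right hkeven.two_dvd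
  have hmod : (n.2 + k.2) % 2 = n.2 % 2 + k.2 % 2 := by obtain ⟨t, ht⟩ := hkeven; omega
  simp only [fdN, Prod.fst_add, Prod.snd_add, Pi.add_apply, add_mul, Finset.sum_add_distrib,
    hdiv, hmod]
  ring

/-- For `n ∈ Λ_{d,N} = ([0,2^N) ∩ ℤ)^d` and `k ∈ Λ_{d,N}^E` (in the box `(-2^N,2^N)^d`,
last coordinate even, `σ_{d,N}(k) ≥ 0`), we have `f_{d,N}(n+k) = f_{d,N}(n) + f_{d,N}(k)`. -/
theorem fdN_additive (m N : ℕ) (hm : 1 ≤ m) (hN : 1 ≤ N)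
    (n k : (Fin m → ℤ) × ℤ)
    (hn1 : ∀ j : Fin m, 0 ≤ n.1 j ∧ n.1 j < 2 ^ N) (hn2 : 0 ≤ n.2 ∧ n.2 < 2 ^ N)
    (hk1 : ∀ j : Fin m, |k.1 j| < 2 ^ N) (hk2 : |k.2| < 2 ^ N)
    (hkeven : Even k.2) (hksigma : 0 ≤ sigmaFull m N k) :
    fdN m N (n + k) = fdN m N n + fdN m N k :=
  fdN_additive_general m N n k hkeven
end

section
/- For d ≥ 2, N ≥ 1, the image f_{d,N}(Λ_{d,N}) contains the set of consecutive integers {0, 1, ..., 2^{N+1} - 1}. -/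
/-- `Λ_{d,N} = ([0, 2^N) ∩ ℤ)^d`, with `d = m + 1`, in pair coordinates. -/
def LambdadN (m N : ℕ) : Set ((Fin m → ℤ) × ℤ) :=
  {p | (∀ j : Fin m, 0 ≤ p.1 j ∧ p.1 j < 2 ^ N) ∧ 0 ≤ p.2 ∧ p.2 < 2 ^ N}

/-- The image `f_{d,N}(Λ_{d,N})` contains the consecutive integers `0, 1, …, 2^{N+1} - 1`. -/
theorem fdN_image_contains_initial_segment (m N : ℕ) (hm : 1 ≤ m) (hN : 1 ≤ N) :
    ∀ t : ℤ, 0 ≤ t → t < 2 ^ (N + 1) → t ∈ fdN m N '' LambdadN m N := by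
  intro t ht0 ht
  refine ⟨⟨fun j => if (j : ℕ) = 0 then t / 2 else 0, t % 2⟩, ⟨?_, ?_, ?_⟩, ?_⟩
  · intro j
    by_cases hj : (j : ℕ) = 0 <;> simp only [hj, if_true, if_false] <;>
      [skip; exact ⟨le_refl 0, by positivity⟩]
    constructor
    · exact Int.ediv_nonneg ht0 (by norm_num)
    · have : t < 2 ^ N * 2 := by rw [pow_succ] at ht; linarith
      omega
  · exact Int.emod_nonneg t (by norm_num)
  · have h2 : (t % 2) < 2 := Int.emod_lt_of_pos t (by norm_num)
    have : (2 : ℤ) ≤ 2 ^ N := by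
      calc (2 : ℤ) = 2 ^ 1 := (pow_one 2).symm
      _ ≤ 2 ^ N := pow_le_pow_right₀ (by norm_num) hN
    linarith
  · simp only [fdN]
    have hsum : (∑ j : Fin m, (if (j : ℕ) = 0 then t / 2 else 0) * 4 ^ ((j : ℕ) * N))
        = t / 2 := by
      rw [Finset.sum_eq_single (⟨0, by omega⟩ : Fin m)]
      · simp
      · intro b _ hb
        have : (b : ℕ) ≠ 0 := fun h => hb (Fin.ext h)
        simp [this]
      · simp
    rw [hsum]
    have h01 : t % 2 % 2 = t % 2 := by omega
    have h02 : t % 2 / 2 = 0 := by omega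
    rw [h01, h02]
    omega
end
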